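/- arXiv:2202.05921 — 4 statements merged into one kernel-verified Lean document; each statement's English description precedes it below -/
import Mathlib

section
/- For any real number α and positive integer N, the set of distinct values {frac(dα) : 1 ≤ d ≤ N}, where frac(x) = x - ⌊x⌋, partitions the circle ℝ/ℤ into arcs whose lengths take at most three distinct values. Precisely: if s₁ < s₂ < ⋯ < s_n are the distinct values of frac(dα) for 1 ≤ d ≤ N, then the set {s_{j+1} - s_j : 1 ≤ j < n} ∪ {s₁ + 1 - s_n} has cardinality at most 3. -/
/-- The set of distinct values `f (d*α + β)` for `1 ≤ d ≤ N`. -/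
def orbitSet (f : ℝ → ℝ) (α β : ℝ) (N : ℕ) : Set ℝ :=
  {y | ∃ d : ℕ, 1 ≤ d ∧ d ≤ N ∧ y = f (d * α + β)}

/-- Gaps between consecutive (nearest-neighbor) elements of a set of reals. -/
def consGaps (S : Set ℝ) : Set ℝ :=
  {g | ∃ a ∈ S, ∃ b ∈ S, a < b ∧ (∀ x ∈ S, x ≤ a ∨ b ≤ x) ∧ g = b - a}

/-- The gap length set `G_{f,α,β,N}`: consecutive gaps together with the
extremal gap `s₁ - inf f + sup f - s_n`. -/
def gapSet (f : ℝ → ℝ) (α β : ℝ) (N : ℕ) : Set ℝ :=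
  consGaps (orbitSet f α β N) ∪
    {sInf (orbitSet f α β N) - sInf (Set.range f) + sSup (Set.range f) -
      sSup (orbitSet f α β N)}

/-!
Let `g t` be the length of the arc from a point `t` of the orbit to the next point
counterclockwise; every gap, including the one across `0`, is some `g t`. Rotation by `α` maps
`frac (dα)` to `frac ((d+1)α)` and preserves arc lengths, so comparing the successors of these two
points gives `g (frac ((d+1)α)) = g (frac (dα))` unless the rotation leaves the orbit. Either the
successor of `frac ((d+1)α)` is `frac α`, and the gap is the one ending at `frac α`; or the
successor of `frac (dα)` is `frac (Nα)`, and the gap after `frac ((d+1)α)` is the old one or the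
sum of the two gaps on either side of `frac (Nα)`. By induction on `d` only these three lengths
occur.
-/

open Set

lemma exists_ne_ne_of_two_lt_ncard {X : Type*} {S : Set X} (h3 : 2 < S.ncard) (a b : X) :
    ∃ w ∈ S, w ≠ a ∧ w ≠ b := by
  have h2 : ({a, b} : Set X).ncard < S.ncard :=
    lt_of_le_of_lt ((ncard_insert_le a {b}).trans (by rw [ncard_singleton])) h3
  obtain ⟨w, hw, hwab⟩ := exists_mem_notMem_of_ncard_lt_ncard h2
  simp only [mem_insert_iff, mem_singleton_iff, not_or] at hwab
  exact ⟨w, hw, hwab⟩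

lemma fract_sub_add_fract_sub_eq_or (a b c : ℝ) :
    Int.fract (b - a) + Int.fract (c - b) = Int.fract (c - a) ∨
      Int.fract (b - a) + Int.fract (c - b) = Int.fract (c - a) + 1 := by
  obtain ⟨z, hz⟩ := Int.fract_add (b - a) (c - b)
  rw [show b - a + (c - b) = c - a by ring] at hz
  have h0 : (-2 : ℝ) < z := by
    linarith [Int.fract_nonneg (c - a), Int.fract_lt_one (b - a), Int.fract_lt_one (c - b)]
  have h1 : (z : ℝ) < 1 := by
    linarith [Int.fract_lt_one (c - a), Int.fract_nonneg (b - a), Int.fract_nonneg (c - b)]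
  obtain rfl | rfl : z = 0 ∨ z = -1 := by
    have : -2 < z := by exact_mod_cast h0
    have : z < 1 := by exact_mod_cast h1
    omega
  · left; push_cast at hz; linarith
  · right; push_cast at hz; linarith

lemma fract_sub_pos {a b : ℝ} (ha : a ∈ Ico 0 1) (hb : b ∈ Ico 0 1) (hab : a ≠ b) :
    0 < Int.fract (a - b) := by
  refine (Int.fract_nonneg _).lt_of_ne fun h => hab ?_
  obtain ⟨z, hz⟩ := Int.fract_eq_iff.mp h.symm |>.2.2
  have h0 : (-1 : ℝ) < z := by linarith [ha.1, hb.2]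
  have h1 : (z : ℝ) < 1 := by linarith [ha.2, hb.1]
  obtain rfl : z = 0 := by
    have : -1 < z := by exact_mod_cast h0
    have : z < 1 := by exact_mod_cast h1
    omega
  push_cast at hz; linarith

lemma fract_sub_of_lt {a b : ℝ} (ha : 0 ≤ a) (hb : b < 1) (hab : a < b) :
    Int.fract (a - b) = a - b + 1 :=
  Int.fract_eq_iff.mpr ⟨by linarith, by linarith, -1, by push_cast; ring⟩

lemma fract_sub_of_le {a b : ℝ} (hb : 0 ≤ b) (ha : a < 1) (hab : b ≤ a) :
    Int.fract (a - b) = a - b :=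
  Int.fract_eq_self.mpr ⟨by linarith, by linarith⟩

/- Points of the circle `ℝ/ℤ` are represented in `[0, 1)`, and `Int.fract (y - t)` is the
counterclockwise distance from `t` to `y`. -/
noncomputable def fwdGap (S : Set ℝ) (t : ℝ) : ℝ :=
  sInf ((fun y => Int.fract (y - t)) '' (S \ {t}))

noncomputable def bwdGap (S : Set ℝ) (t : ℝ) : ℝ :=
  sInf ((fun y => Int.fract (t - y)) '' (S \ {t}))

section Gaps

variable {S : Set ℝ} {a b t w y : ℝ}

lemma fwdGap_le (hS : S.Finite) (hy : y ∈ S) (hyt : y ≠ t) : fwdGap S t ≤ Int.fract (y - t) :=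
  csInf_le ((hS.sdiff).image _).bddBelow ⟨y, ⟨hy, hyt⟩, rfl⟩

lemma exists_fract_sub_eq_fwdGap (hS : S.Finite) (hy : y ∈ S) (hyt : y ≠ t) :
    ∃ z ∈ S, z ≠ t ∧ Int.fract (z - t) = fwdGap S t := by
  obtain ⟨z, ⟨hz, hzt⟩, h⟩ :=
    Set.Nonempty.csInf_mem (s := (fun y => Int.fract (y - t)) '' (S \ {t}))
      ⟨_, ⟨y, ⟨hy, hyt⟩, rfl⟩⟩ ((hS.sdiff).image _)
  exact ⟨z, hz, hzt, h⟩

lemma fwdGap_eq (hy : y ∈ S) (hyt : y ≠ t)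
    (hmin : ∀ z ∈ S, z ≠ t → Int.fract (y - t) ≤ Int.fract (z - t)) :
    fwdGap S t = Int.fract (y - t) :=
  IsLeast.csInf_eq ⟨⟨y, ⟨hy, hyt⟩, rfl⟩, by rintro _ ⟨z, ⟨hz, hzt⟩, rfl⟩; exact hmin z hz hzt⟩

lemma consGaps_subset_image_fwdGap (hS01 : S ⊆ Ico 0 1) : consGaps S ⊆ fwdGap S '' S := by
  rintro _ ⟨a, ha, b, hb, hab, hsep, rfl⟩
  have hba : Int.fract (b - a) = b - a := fract_sub_of_le (hS01 ha).1 (hS01 hb).2 hab.le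
  refine ⟨a, ha, hba ▸ fwdGap_eq hb hab.ne' fun z hz hza => ?_⟩
  rw [hba]
  rcases hsep z hz with hza' | hbz
  · rw [fract_sub_of_lt (hS01 hz).1 (hS01 ha).2 (hza'.lt_of_ne hza)]
    linarith [(hS01 hz).1, (hS01 hb).2]
  · rw [fract_sub_of_le (hS01 ha).1 (hS01 hz).2 (hab.le.trans hbz)]
    linarith

lemma fwdGap_sSup (hS01 : S ⊆ Ico 0 1) (hS : S.Finite) (h2 : S.Nontrivial) :
    fwdGap S (sSup S) = sInf S + 1 - sSup S := by
  have hinf : sInf S ∈ S := h2.nonempty.csInf_mem hS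
  have hsup1 : sSup S < 1 := (hS01 (h2.nonempty.csSup_mem hS)).2
  have hlt : sInf S < sSup S := by
    obtain ⟨u, hu, v, hv, huv⟩ := h2
    by_contra! h
    apply huv
    linarith [csInf_le hS.bddBelow hu, le_csSup hS.bddAbove hu, csInf_le hS.bddBelow hv,
      le_csSup hS.bddAbove hv]
  have hwrap : Int.fract (sInf S - sSup S) = sInf S + 1 - sSup S := by
    rw [fract_sub_of_lt (hS01 hinf).1 hsup1 hlt]; ring
  refine hwrap ▸ fwdGap_eq hinf hlt.ne fun z hz hzs => ?_
  rw [hwrap, fract_sub_of_lt (hS01 hz).1 hsup1 ((le_csSup hS.bddAbove hz).lt_of_ne hzs)]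
  linarith [csInf_le hS.bddBelow hz]

lemma fract_sub_eq_fwdGap_add (hS : S.Finite) (hnext : Int.fract (b - a) = fwdGap S a)
    (hw : w ∈ S) (hwa : w ≠ a) : Int.fract (w - a) = fwdGap S a + Int.fract (w - b) := by
  have hle := fwdGap_le hS hw hwa
  rcases fract_sub_add_fract_sub_eq_or a b w with h | h
  · linarith
  · linarith [Int.fract_lt_one (w - b)]

lemma bwdGap_eq_of_next (hS01 : S ⊆ Ico 0 1) (hS : S.Finite) (ha : a ∈ S) (hb : b ∈ S) (hba : b ≠ a)
    (hnext : Int.fract (b - a) = fwdGap S a) : bwdGap S b = Int.fract (b - a) := by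
  refine IsLeast.csInf_eq ⟨⟨a, ⟨ha, hba.symm⟩, rfl⟩, ?_⟩
  rintro _ ⟨z, ⟨hz, hzb⟩, rfl⟩
  rcases eq_or_ne z a with rfl | hza
  · rfl
  have hle := fwdGap_le hS hz hza
  have hpos := fract_sub_pos (hS01 hb) (hS01 hz) (Ne.symm hzb)
  rcases fract_sub_add_fract_sub_eq_or a z b with h | h
  · linarith [Int.fract_nonneg (z - a)]
  · linarith [Int.fract_lt_one (z - a)]

lemma fract_sub_ne_fwdGap_of_next (hS01 : S ⊆ Ico 0 1) (hS : S.Finite) (ha : a ∈ S) (hb : b ∈ S)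
    (hba : b ≠ a) (hnext : Int.fract (b - a) = fwdGap S a) (hw : w ∈ S) (hwa : w ≠ a)
    (hwb : w ≠ b) : Int.fract (a - b) ≠ fwdGap S b := by
  intro hback
  have hsum : Int.fract (b - a) + Int.fract (a - b) = 1 := by
    have := fract_sub_pos (hS01 hb) (hS01 ha) hba
    have := fract_sub_pos (hS01 ha) (hS01 hb) hba.symm
    rcases fract_sub_add_fract_sub_eq_or a b a with h | h <;>
      simp only [sub_self, Int.fract_zero] at h <;> linarith
  have := fract_sub_eq_fwdGap_add hS hnext hw hwa
  linarith [fwdGap_le hS hw hwb, Int.fract_lt_one (w - a)]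

lemma gaps_subset_image_fwdGap (hS01 : S ⊆ Ico 0 1) (hS : S.Finite) (h2 : S.Nontrivial) :
    consGaps S ∪ {sInf S + 1 - sSup S} ⊆ fwdGap S '' S :=
  union_subset (consGaps_subset_image_fwdGap hS01) <| singleton_subset_iff.mpr
    ⟨sSup S, h2.nonempty.csSup_mem hS, fwdGap_sSup hS01 hS h2⟩

end Gaps

noncomputable def orbitPoint (α : ℝ) (d : ℕ) : ℝ := Int.fract (d * α)

def fractOrbit (α : ℝ) (N : ℕ) : Set ℝ := orbitPoint α '' Icc 1 N

section Orbit

variable {α : ℝ} {N d e : ℕ}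

local notation "𝒪" => fractOrbit α N

lemma fractOrbit_subset_Ico : 𝒪 ⊆ Ico 0 1 := by
  rintro _ ⟨d, -, rfl⟩
  exact ⟨Int.fract_nonneg _, Int.fract_lt_one _⟩

lemma fractOrbit_finite : (𝒪).Finite := (finite_Icc 1 N).image _

lemma orbitPoint_mem_fractOrbit (hd : 1 ≤ d) (hdN : d ≤ N) : orbitPoint α d ∈ 𝒪 :=
  ⟨d, ⟨hd, hdN⟩, rfl⟩

lemma fract_orbitPoint_succ_sub (α : ℝ) (d e : ℕ) :
    Int.fract (orbitPoint α (e + 1) - orbitPoint α (d + 1)) =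
      Int.fract (orbitPoint α e - orbitPoint α d) := by
  rw [Int.fract_eq_fract]
  refine ⟨⌊(e : ℝ) * α⌋ - ⌊(d : ℝ) * α⌋ - ⌊((e + 1 : ℕ) : ℝ) * α⌋ + ⌊((d + 1 : ℕ) : ℝ) * α⌋, ?_⟩
  simp only [orbitPoint, Int.fract]
  push_cast
  ring

lemma orbitPoint_succ_eq_iff : orbitPoint α (e + 1) = orbitPoint α (d + 1) ↔
    orbitPoint α e = orbitPoint α d := by
  simp only [orbitPoint, Int.fract_eq_fract]
  push_cast
  simp only [show ∀ x y : ℝ, (x + 1) * α - (y + 1) * α = x * α - y * α by intros; ring]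

lemma fwdGap_succ_le_of_next_eq_last (h3 : 2 < (𝒪).ncard) (hd : 1 ≤ d) (hdN : d + 1 ≤ N)
    (hNd : orbitPoint α N ≠ orbitPoint α d)
    (hnext : Int.fract (orbitPoint α N - orbitPoint α d) = fwdGap 𝒪 (orbitPoint α d)) :
    fwdGap 𝒪 (orbitPoint α (d + 1)) ≤ fwdGap 𝒪 (orbitPoint α d) + fwdGap 𝒪 (orbitPoint α N) := by
  have hS : (𝒪).Finite := fractOrbit_finite
  have hx : orbitPoint α d ∈ 𝒪 := orbitPoint_mem_fractOrbit hd (by omega)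
  have hM : orbitPoint α N ∈ 𝒪 := orbitPoint_mem_fractOrbit (by omega) le_rfl
  obtain ⟨w, hw, hwM, hgw⟩ := exists_fract_sub_eq_fwdGap hS hx hNd.symm
  obtain ⟨z, hz, hzx, hzM⟩ := exists_ne_ne_of_two_lt_ncard h3 (orbitPoint α d) (orbitPoint α N)
  have hwx : w ≠ orbitPoint α d := fun h =>
    fract_sub_ne_fwdGap_of_next fractOrbit_subset_Ico hS hx hM hNd hnext hz hzx hzM (h ▸ hgw)
  obtain ⟨f, ⟨hf1, hfN⟩, rfl⟩ := hw
  have hfN : f + 1 ≤ N := hfN.lt_of_ne (by rintro rfl; exact hwM rfl)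
  calc fwdGap 𝒪 (orbitPoint α (d + 1))
      ≤ Int.fract (orbitPoint α (f + 1) - orbitPoint α (d + 1)) :=
        fwdGap_le hS (orbitPoint_mem_fractOrbit (by omega) hfN) (mt orbitPoint_succ_eq_iff.mp hwx)
    _ = Int.fract (orbitPoint α f - orbitPoint α d) := fract_orbitPoint_succ_sub α d f
    _ = fwdGap 𝒪 (orbitPoint α d) + fwdGap 𝒪 (orbitPoint α N) := by
        rw [fract_sub_eq_fwdGap_add hS hnext ⟨f, ⟨hf1, by omega⟩, rfl⟩ hwx, hgw]

lemma fwdGap_succ_mem (h3 : 2 < (𝒪).ncard) (hd : 1 ≤ d) (hdN : d + 1 ≤ N) :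
    fwdGap 𝒪 (orbitPoint α (d + 1)) ∈ ({fwdGap 𝒪 (orbitPoint α d), bwdGap 𝒪 (orbitPoint α 1),
      bwdGap 𝒪 (orbitPoint α N) + fwdGap 𝒪 (orbitPoint α N)} : Set ℝ) := by
  have hS01 : 𝒪 ⊆ Ico 0 1 := fractOrbit_subset_Ico
  have hS : (𝒪).Finite := fractOrbit_finite
  have hx : orbitPoint α d ∈ 𝒪 := orbitPoint_mem_fractOrbit hd (by omega)
  have ht : orbitPoint α (d + 1) ∈ 𝒪 := orbitPoint_mem_fractOrbit (by omega) hdN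
  obtain ⟨u, hu, hut⟩ := exists_ne_of_one_lt_ncard (by omega : 1 < (𝒪).ncard) (orbitPoint α (d + 1))
  obtain ⟨y, ⟨e, ⟨he1, heN⟩, rfl⟩, hyt, hgy⟩ := exists_fract_sub_eq_fwdGap hS hu hut
  obtain rfl | he1 := he1.eq_or_lt
  · have hm : orbitPoint α 1 ∈ 𝒪 := orbitPoint_mem_fractOrbit le_rfl heN
    exact Or.inr (Or.inl ((bwdGap_eq_of_next hS01 hS ht hm hyt hgy).trans hgy).symm)
  obtain ⟨e, rfl⟩ : ∃ e', e = e' + 1 := ⟨e - 1, by omega⟩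
  have hy : orbitPoint α e ∈ 𝒪 := orbitPoint_mem_fractOrbit (by omega) (by omega)
  have hyx : orbitPoint α e ≠ orbitPoint α d := mt orbitPoint_succ_eq_iff.mpr hyt
  have hgt : fwdGap 𝒪 (orbitPoint α (d + 1)) = Int.fract (orbitPoint α e - orbitPoint α d) := by
    rw [← hgy, fract_orbitPoint_succ_sub]
  have hlow : fwdGap 𝒪 (orbitPoint α d) ≤ fwdGap 𝒪 (orbitPoint α (d + 1)) :=
    hgt ▸ fwdGap_le hS hy hyx
  obtain ⟨z, ⟨f, ⟨hf1, hfN⟩, rfl⟩, hzx, hgz⟩ := exists_fract_sub_eq_fwdGap hS hy hyx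
  obtain hfN | hfN := hfN.lt_or_eq
  · refine Or.inl (le_antisymm ?_ hlow)
    calc fwdGap 𝒪 (orbitPoint α (d + 1))
        ≤ Int.fract (orbitPoint α (f + 1) - orbitPoint α (d + 1)) :=
          fwdGap_le hS (orbitPoint_mem_fractOrbit (by omega) hfN) (mt orbitPoint_succ_eq_iff.mp hzx)
      _ = fwdGap 𝒪 (orbitPoint α d) := by rw [fract_orbitPoint_succ_sub, hgz]
  rw [hfN] at hzx hgz
  by_cases hyM : orbitPoint α e = orbitPoint α N
  · exact Or.inl (by rw [hgt, hyM, hgz])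
  refine Or.inr (Or.inr ?_)
  rw [bwdGap_eq_of_next hS01 hS hx (orbitPoint_mem_fractOrbit (by omega) le_rfl) hzx hgz, hgz]
  refine le_antisymm (fwdGap_succ_le_of_next_eq_last h3 hd hdN hzx hgz) ?_
  rw [hgt, fract_sub_eq_fwdGap_add hS hgz hy hyx]
  linarith [fwdGap_le hS hy hyM]

lemma image_fwdGap_fractOrbit_subset (h3 : 2 < (𝒪).ncard) :
    fwdGap 𝒪 '' 𝒪 ⊆
      {fwdGap 𝒪 (orbitPoint α 1), bwdGap 𝒪 (orbitPoint α 1),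
        bwdGap 𝒪 (orbitPoint α N) + fwdGap 𝒪 (orbitPoint α N)} := by
  rintro _ ⟨_, ⟨d, ⟨hd, hdN⟩, rfl⟩, rfl⟩
  induction d, hd using Nat.le_induction with
  | base => exact mem_insert _ _
  | succ d hd ih =>
    obtain h | h | h := fwdGap_succ_mem h3 hd hdN
    · exact h ▸ ih (by omega)
    · exact h ▸ mem_insert_of_mem _ (mem_insert _ _)
    · exact h ▸ mem_insert_of_mem _ (mem_insert_of_mem _ rfl)

end Orbit

theorem three_gap_theorem_general (α : ℝ) (N : ℕ) (S : Set ℝ)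
    (hS : S = {y | ∃ d : ℕ, 1 ≤ d ∧ d ≤ N ∧ y = Int.fract (d * α)}) :
    (consGaps S ∪ {sInf S + 1 - sSup S}).ncard ≤ 3 := by
  obtain rfl : S = fractOrbit α N := by
    rw [hS]; ext y; simp [fractOrbit, orbitPoint, eq_comm, and_assoc]
  obtain hsub | h2 := (fractOrbit α N).subsingleton_or_nontrivial
  · have : consGaps (fractOrbit α N) = ∅ :=
      eq_empty_of_forall_notMem fun _ ⟨_, ha, _, hb, hab, _⟩ => hab.ne (hsub ha hb)
    simp [this]
  have hgaps := gaps_subset_image_fwdGap fractOrbit_subset_Ico fractOrbit_finite h2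
  obtain h3 | h3 := le_or_gt (fractOrbit α N).ncard 3
  · exact (ncard_le_ncard hgaps (fractOrbit_finite.image _)).trans
      ((ncard_image_le fractOrbit_finite).trans h3)
  calc _ ≤ _ := ncard_le_ncard (hgaps.trans (image_fwdGap_fractOrbit_subset (by omega))) (by simp)
    _ ≤ 3 := by
      rw [← Finset.coe_pair, ← Finset.coe_insert, ncard_coe_finset]
      exact Finset.card_le_three

/-- **Three Gap Theorem.** The points `frac(dα)`, `1 ≤ d ≤ N`, partition the
circle `ℝ/ℤ` into arcs of at most three distinct lengths. -/
theorem three_gap_theorem (α : ℝ) (N : ℕ) (hN : 0 < N) (S : Set ℝ)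
    (hS : S = {y | ∃ d : ℕ, 1 ≤ d ∧ d ≤ N ∧ y = Int.fract (d * α)}) :
    (consGaps S ∪ {sInf S + 1 - sSup S}).ncard ≤ 3 :=
  three_gap_theorem_general α N S hS
end

section
/- Let f be a piecewise-linear periodic function which is injective on its fundamental domain [0,P), having ℓ linear pieces whose slopes have μ distinct magnitudes. Then for any α ∈ ℝ and N ∈ ℕ, the number of distinct gap lengths satisfies |G_{f,α,N}| ≤ 3μ + ℓ. -/
open Set Pointwise

section Fract

variable {R : Type*} [CommRing R] [LinearOrder R] [IsStrictOrderedRing R] [FloorRing R]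

theorem Int.fract_add_of_fract_add_fract_lt_one {x y : R} (h : Int.fract x + Int.fract y < 1) :
    Int.fract (x + y) = Int.fract x + Int.fract y :=
  Int.fract_eq_iff.2 ⟨add_nonneg (Int.fract_nonneg x) (Int.fract_nonneg y), h, ⌊x⌋ + ⌊y⌋,
    by unfold Int.fract; push_cast; abel⟩

theorem Int.fract_sub_of_fract_le {x y : R} (h : Int.fract y ≤ Int.fract x) :
    Int.fract (x - y) = Int.fract x - Int.fract y :=
  Int.fract_eq_iff.2 ⟨sub_nonneg.2 h, (sub_le_self _ (Int.fract_nonneg y)).trans_lt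
    (Int.fract_lt_one x), ⌊x⌋ - ⌊y⌋, by unfold Int.fract; push_cast; abel⟩

theorem Int.fract_sub_of_fract_lt {x y : R} (h : Int.fract x < Int.fract y) :
    Int.fract (x - y) = Int.fract x - Int.fract y + 1 :=
  Int.fract_eq_iff.2 ⟨by linarith [Int.fract_lt_one y, Int.fract_nonneg x], by linarith,
    ⌊x⌋ - ⌊y⌋ - 1, by unfold Int.fract; push_cast; abel⟩

end Fract

section ConsGaps

variable {S X I C : Set ℝ}

theorem consGaps_empty : consGaps ∅ = ∅ :=
  eq_empty_of_forall_notMem fun _ ⟨_, ha, _⟩ => ha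

theorem consGaps_inter_subset (hI : I.OrdConnected) : consGaps (X ∩ I) ⊆ consGaps X := by
  rintro _ ⟨x, ⟨hx, hxI⟩, y, ⟨hy, hyI⟩, hxy, hcons, rfl⟩
  refine ⟨x, hx, y, hy, hxy, fun z hz => ?_, rfl⟩
  by_contra! h
  rcases hcons z ⟨hz, hI.out hxI hyI ⟨h.1.le, h.2.le⟩⟩ with h' | h' <;> linarith [h.1, h.2]

theorem consGaps_image_subset_of_affine {φ : ℝ → ℝ} {m c : ℝ}
    (hφ : ∀ x ∈ X, φ x = m * x + c) : consGaps (φ '' X) ⊆ |m| • consGaps X := by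
  rintro _ ⟨_, ⟨x, hx, rfl⟩, _, ⟨y, hy, rfl⟩, hxy, hcons, rfl⟩
  rw [hφ x hx, hφ y hy, add_lt_add_iff_right] at hxy
  have hcons' : ∀ z ∈ X, m * z ≤ m * x ∨ m * y ≤ m * z := fun z hz => by
    simpa only [hφ _ hz, hφ _ hx, hφ _ hy, add_le_add_iff_right] using hcons _ ⟨z, hz, rfl⟩
  rcases lt_or_gt_of_ne (show m ≠ 0 by rintro rfl; simp at hxy) with hm | hm
  · refine ⟨x - y, ⟨y, hy, x, hx, (mul_lt_mul_left_of_neg hm).1 hxy, fun z hz => ?_, rfl⟩, ?_⟩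
    · simpa only [mul_le_mul_left_of_neg hm, or_comm] using hcons' z hz
    · simp only [smul_eq_mul, abs_of_neg hm, hφ x hx, hφ y hy]; ring
  · refine ⟨y - x, ⟨x, hx, y, hy, (mul_lt_mul_iff_right₀ hm).1 hxy, fun z hz => ?_, rfl⟩, ?_⟩
    · simpa only [mul_le_mul_iff_right₀ hm] using hcons' z hz
    · simp only [smul_eq_mul, abs_of_pos hm, hφ x hx, hφ y hy]; ring

noncomputable def boundaryGap (S C : Set ℝ) : ℝ :=
  sInf (S ∩ C) - sSup {s ∈ S | s < sInf (S ∩ C)}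

variable {u v : ℝ}

theorem isLeast_inter_of_consecutive (hC : C.OrdConnected) (hv : v ∈ S) (huC : u ∉ C)
    (hvC : v ∈ C) (huv : u < v) (hcons : ∀ x ∈ S, x ≤ u ∨ v ≤ x) : IsLeast (S ∩ C) v := by
  refine ⟨⟨hv, hvC⟩, fun w ⟨hw, hwC⟩ => le_of_not_gt fun hwv => ?_⟩
  rcases hcons w hw with h | h
  · exact huC (hC.out hwC hvC ⟨h, huv.le⟩)
  · exact h.not_gt hwv

theorem boundaryGap_eq (hC : C.OrdConnected) (hu : u ∈ S) (hv : v ∈ S) (huC : u ∉ C)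
    (hvC : v ∈ C) (huv : u < v) (hcons : ∀ x ∈ S, x ≤ u ∨ v ≤ x) :
    boundaryGap S C = v - u := by
  have hmax : IsGreatest {s ∈ S | s < v} u :=
    ⟨⟨hu, huv⟩, fun w ⟨hw, hwv⟩ => (hcons w hw).resolve_right hwv.not_ge⟩
  rw [boundaryGap, (isLeast_inter_of_consecutive hC hv huC hvC huv hcons).csInf_eq,
    hmax.csSup_eq]

open Classical in
theorem consGaps_subset_of_subset_biUnion {ι : Type*} {J : Finset ι} {C : ι → Set ℝ}
    (hS : S.Finite) (hcover : S ⊆ ⋃ j ∈ J, C j) (hC : ∀ j ∈ J, (C j).OrdConnected) :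
    consGaps S ⊆ (⋃ j ∈ J, consGaps (S ∩ C j)) ∪
      ↑((J.filter fun j => sInf S ∉ C j).image fun j => boundaryGap S (C j)) := by
  rintro _ ⟨u, hu, v, hv, huv, hcons, rfl⟩
  obtain ⟨j, hj, hvC⟩ := mem_iUnion₂.1 (hcover hv)
  by_cases huC : u ∈ C j
  · exact Or.inl (mem_iUnion₂.2
      ⟨j, hj, u, ⟨hu, huC⟩, v, ⟨hv, hvC⟩, huv, fun x hx => hcons x hx.1, rfl⟩)
  refine Or.inr (Finset.mem_image.2 ⟨j, Finset.mem_filter.2 ⟨hj, fun hmin => ?_⟩,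
    boundaryGap_eq (hC j hj) hu hv huC hvC huv hcons⟩)
  have hvmin := (isLeast_inter_of_consecutive (hC j hj) hv huC hvC huv hcons).2
    ⟨Set.Nonempty.csInf_mem ⟨u, hu⟩ hS, hmin⟩
  exact (hvmin.trans (csInf_le hS.bddBelow hu)).not_gt huv

theorem ncard_consGaps_le_of_subset_biUnion {ι : Type*} {J : Finset ι} {C : ι → Set ℝ}
    {A : Finset ℝ} (hS : S.Finite) (hcover : S ⊆ ⋃ j ∈ J, C j)
    (hC : ∀ j ∈ J, (C j).OrdConnected) (hA : ∀ j ∈ J, consGaps (S ∩ C j) ⊆ A) :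
    (consGaps S).ncard ≤ A.card + (J.card - 1) := by
  classical
  rcases S.eq_empty_or_nonempty with rfl | hne
  · simp [consGaps_empty]
  obtain ⟨j₀, hj₀, hmin⟩ := mem_iUnion₂.1 (hcover (hne.csInf_mem hS))
  set B := (J.filter fun j => sInf S ∉ C j).image fun j => boundaryGap S (C j)
  have hB : B.card ≤ J.card - 1 := calc
    B.card ≤ (J.erase j₀).card := Finset.card_image_le.trans <| Finset.card_le_card fun j hj =>
      have hj := Finset.mem_filter.1 hj
      Finset.mem_erase.2 ⟨fun h => hj.2 (h ▸ hmin), hj.1⟩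
    _ = J.card - 1 := Finset.card_erase_of_mem hj₀
  have hsub : consGaps S ⊆ ↑(A ∪ B) := by
    rw [Finset.coe_union]
    exact (consGaps_subset_of_subset_biUnion hS hcover hC).trans
      (union_subset_union (iUnion₂_subset hA) le_rfl)
  calc (consGaps S).ncard ≤ (A ∪ B).card :=
        (ncard_le_ncard hsub (Finset.finite_toSet _)).trans (ncard_coe_finset _).le
    _ ≤ A.card + (J.card - 1) := (Finset.card_union_le _ _).trans (by omega)

end ConsGaps

def fractPoints (θ : ℝ) (N : ℤ) : Set ℝ :=
  {x | ∃ d ∈ Icc 1 N, Int.fract (d * θ) = x}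

theorem finite_fractPoints (θ : ℝ) (N : ℤ) : (fractPoints θ N).Finite :=
  (finite_Icc 1 N).image _

section ThreeGap

variable {θ g vp vq : ℝ} {N a b k : ℤ}

theorem fract_mul_notMem_Ioo_of_consecutive
    (hcons : ∀ c ∈ Icc 1 N,
      Int.fract (c * θ) ≤ Int.fract (a * θ) ∨ Int.fract (b * θ) ≤ Int.fract (c * θ))
    (hk : a + k ∈ Icc 1 N) :
    Int.fract (k * θ) ∉ Ioo 0 (Int.fract (b * θ) - Int.fract (a * θ)) := by
  rintro ⟨hpos, hlt⟩
  have hsum : Int.fract (a * θ) + Int.fract (k * θ) < 1 := by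
    linarith [Int.fract_lt_one (b * θ)]
  have hak := Int.fract_add_of_fract_add_fract_lt_one hsum
  rw [← add_mul, ← Int.cast_add] at hak
  rcases hcons _ hk with h | h <;> linarith

theorem lt_add_of_forall_fract_mul_notMem_Ioo {p : ℤ}
    (hgap : ∀ k, a + k ∈ Icc 1 N → Int.fract (k * θ) ∉ Ioo 0 g) (ha : 1 ≤ a) (hp : 0 ≤ p)
    (hp0 : 0 < Int.fract (p * θ)) (hpg : Int.fract (p * θ) < g) : N < a + p := by
  by_contra h
  exact hgap p (by rw [mem_Icc]; omega) ⟨hp0, hpg⟩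

theorem le_of_forall_fract_mul_notMem_Ioo {q : ℤ}
    (hgap : ∀ k, a + k ∈ Icc 1 N → Int.fract (k * θ) ∉ Ioo 0 g) (haN : a ≤ N) (hq : 0 ≤ q)
    (hq0 : 0 < Int.fract (q * θ)) (hqg : 1 - Int.fract (q * θ) < g) : a ≤ q := by
  by_contra h
  refine hgap (-q) (by rw [mem_Icc]; omega) ?_
  rw [Int.cast_neg, neg_mul, Int.fract_neg hq0.ne']
  exact ⟨by linarith [Int.fract_lt_one (q * θ)], hqg⟩

theorem le_add_one_sub_of_forall_fract_mul_notMem_Ioo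
    (hvp : IsLeast (fractPoints θ N ∩ Ioi 0) vp) (hvq : IsGreatest (fractPoints θ N) vq)
    (ha : a ∈ Icc 1 N) (hgap : ∀ k, a + k ∈ Icc 1 N → Int.fract (k * θ) ∉ Ioo 0 g)
    (hvpg : vp < g) (hvqg : 1 - vq < g) (hvpq : vp < vq) : g ≤ vp + 1 - vq := by
  obtain ⟨⟨p, hp, rfl⟩, hp0⟩ := hvp.1
  obtain ⟨q, hq, rfl⟩ := hvq.1
  rw [mem_Icc] at ha hp hq
  have hap := lt_add_of_forall_fract_mul_notMem_Ioo hgap ha.1 (by omega) hp0 hvpg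
  have haq := le_of_forall_fract_mul_notMem_Ioo hgap ha.2 (by omega) (hp0.trans hvpq) hvqg
  by_contra h
  refine hgap (p - q) (by rw [mem_Icc]; omega) ?_
  rw [Int.cast_sub, sub_mul, Int.fract_sub_of_fract_lt hvpq]
  exact ⟨by linarith [Int.fract_lt_one (q * θ), Int.fract_nonneg (p * θ)], by linarith⟩

theorem mem_of_fract_mul_eq_of_pos
    (hvp : IsLeast (fractPoints θ N ∩ Ioi 0) vp) (hvq : IsGreatest (fractPoints θ N) vq)
    (ha : a ∈ Icc 1 N) (hgap : ∀ k, a + k ∈ Icc 1 N → Int.fract (k * θ) ∉ Ioo 0 g)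
    (hk : 0 < k) (hak : a + k ∈ Icc 1 N) (hg : Int.fract (k * θ) = g) (hg0 : 0 < g) :
    g ∈ ({vp, 1 - vq, vp + 1 - vq} : Set ℝ) := by
  rw [mem_Icc] at ha hak
  rcases (hvp.2 ⟨⟨k, by rw [mem_Icc]; omega, hg⟩, hg0⟩ : vp ≤ g).eq_or_lt with h | hvpg
  · exact Or.inl h.symm
  obtain ⟨⟨p, hp, rfl⟩, hp0⟩ := hvp.1
  rw [mem_Icc] at hp
  rw [mem_Ioi] at hp0
  have hap := lt_add_of_forall_fract_mul_notMem_Ioo hgap ha.1 (by omega) hp0 hvpg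
  have hle : Int.fract (((p - k : ℤ) : ℝ) * θ) ≤ vq :=
    hvq.2 ⟨p - k, by rw [mem_Icc]; omega, rfl⟩
  rw [Int.cast_sub, sub_mul, Int.fract_sub_of_fract_lt (hg ▸ hvpg), hg] at hle
  have hg1 : g < 1 := hg ▸ Int.fract_lt_one _
  refine Or.inr (Or.inr (le_antisymm ?_ (by linarith)))
  exact le_add_one_sub_of_forall_fract_mul_notMem_Ioo hvp hvq (by rw [mem_Icc]; omega) hgap hvpg
    (by linarith) (by linarith)

theorem mem_of_fract_mul_eq_of_neg
    (hvp : IsLeast (fractPoints θ N ∩ Ioi 0) vp) (hvq : IsGreatest (fractPoints θ N) vq)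
    (ha : a ∈ Icc 1 N) (hgap : ∀ k, a + k ∈ Icc 1 N → Int.fract (k * θ) ∉ Ioo 0 g)
    (hk : k < 0) (hak : a + k ∈ Icc 1 N) (hg : Int.fract (k * θ) = g) (hg0 : 0 < g) :
    g ∈ ({vp, 1 - vq, vp + 1 - vq} : Set ℝ) := by
  rw [mem_Icc] at ha hak
  have hs : Int.fract (((-k : ℤ) : ℝ) * θ) = 1 - g := by
    rw [Int.cast_neg, neg_mul, Int.fract_neg (hg ▸ hg0.ne'), hg]
  have hg1 : g < 1 := hg ▸ Int.fract_lt_one _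
  rcases (hs ▸ hvq.2 ⟨-k, by rw [mem_Icc]; omega, rfl⟩ : 1 - g ≤ vq).eq_or_lt with h | hvqg
  · exact Or.inr (Or.inl (by linarith))
  obtain ⟨q, hq, rfl⟩ := hvq.1
  rw [mem_Icc] at hq
  have haq := le_of_forall_fract_mul_notMem_Ioo (q := q) hgap ha.2 (by omega) (by linarith)
    (by linarith)
  have hqk : Int.fract (((q + k : ℤ) : ℝ) * θ) = Int.fract (q * θ) - (1 - g) := by
    rw [show ((q + k : ℤ) : ℝ) * θ = q * θ - ((-k : ℤ) : ℝ) * θ by push_cast; ring,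
      Int.fract_sub_of_fract_le (by rw [hs]; exact hvqg.le), hs]
  have hle : vp ≤ Int.fract (q * θ) - (1 - g) :=
    hqk ▸ hvp.2 ⟨⟨q + k, by rw [mem_Icc]; omega, rfl⟩, by rw [mem_Ioi, hqk]; linarith⟩
  refine Or.inr (Or.inr (le_antisymm ?_ (by linarith)))
  have hq1 := Int.fract_lt_one ((q : ℝ) * θ)
  exact le_add_one_sub_of_forall_fract_mul_notMem_Ioo hvp hvq (by rw [mem_Icc]; omega) hgap
    (by linarith) (by linarith) (by linarith)

theorem consGaps_fractPoints_subset (hvp : IsLeast (fractPoints θ N ∩ Ioi 0) vp)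
    (hvq : IsGreatest (fractPoints θ N) vq) :
    consGaps (fractPoints θ N) ⊆ {vp, 1 - vq, vp + 1 - vq} := by
  rintro _ ⟨_, ⟨a, ha, rfl⟩, _, ⟨b, hb, rfl⟩, hab, hcons, rfl⟩
  have hgap : ∀ k, a + k ∈ Icc 1 N →
      Int.fract (k * θ) ∉ Ioo 0 (Int.fract (b * θ) - Int.fract (a * θ)) := fun k =>
    fract_mul_notMem_Ioo_of_consecutive fun c hc => hcons _ ⟨c, hc, rfl⟩
  have hg : Int.fract (((b - a : ℤ) : ℝ) * θ) = Int.fract (b * θ) - Int.fract (a * θ) := by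
    rw [Int.cast_sub, sub_mul, Int.fract_sub_of_fract_le hab.le]
  have hab' : a + (b - a) ∈ Icc 1 N := by rwa [add_sub_cancel]
  rcases lt_trichotomy (b - a) 0 with h | h | h
  · exact mem_of_fract_mul_eq_of_neg hvp hvq ha hgap h hab' hg (sub_pos.2 hab)
  · exact absurd hab (by rw [sub_eq_zero.1 h]; exact lt_irrefl _)
  · exact mem_of_fract_mul_eq_of_pos hvp hvq ha hgap h hab' hg (sub_pos.2 hab)

theorem exists_finset_consGaps_fractPoints_subset (θ : ℝ) (N : ℤ) :
    ∃ T : Finset ℝ, T.card ≤ 3 ∧ consGaps (fractPoints θ N) ⊆ T := by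
  classical
  have hfin := finite_fractPoints θ N
  rcases (fractPoints θ N ∩ Ioi 0).eq_empty_or_nonempty with hpos | hpos
  · refine ⟨∅, by simp, ?_⟩
    rintro _ ⟨_, ⟨a, -, rfl⟩, y, hy, hay, -, rfl⟩
    exact (notMem_empty y (hpos.subset ⟨hy, (Int.fract_nonneg _).trans_lt hay⟩)).elim
  obtain ⟨vp, hvp⟩ := (hfin.inter_of_left _).isCompact.exists_isLeast hpos
  obtain ⟨vq, hvq⟩ := hfin.isCompact.exists_isGreatest (hpos.mono inter_subset_left)
  exact ⟨{vp, 1 - vq, vp + 1 - vq}, Finset.card_le_three,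
    by simpa using consGaps_fractPoints_subset hvp hvq⟩

end ThreeGap

theorem exists_finset_consGaps_smul_fractPoints_subset (P θ : ℝ) (N : ℤ) :
    ∃ T : Finset ℝ, T.card ≤ 3 ∧ consGaps (P • fractPoints θ N) ⊆ T := by
  obtain ⟨T, hT, hgaps⟩ := exists_finset_consGaps_fractPoints_subset θ N
  refine ⟨|P| • T, Finset.card_smul_finset_le.trans hT, ?_⟩
  rw [Finset.coe_smul_finset]
  exact (consGaps_image_subset_of_affine (c := 0) fun x _ => by simp).trans (smul_set_mono hgaps)

theorem Ico_subset_Ico_of_forall_lt_succ {β : Type*} [PartialOrder β] {t : ℕ → β} {ℓ i : ℕ}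
    (ht : ∀ i < ℓ, t i < t (i + 1)) (hi : i < ℓ) : Ico (t i) (t (i + 1)) ⊆ Ico (t 0) (t ℓ) := by
  have hmono : MonotoneOn t (Iic ℓ) :=
    (strictMonoOn_Iic_of_lt_succ fun j hj => by simpa using ht j hj).monotoneOn
  exact Ico_subset_Ico (hmono (by simp) (by simp; omega) (Nat.zero_le i))
    (hmono (by simp; omega) (by simp) hi)

section Affine

variable {f : ℝ → ℝ} {I : Set ℝ} {m c : ℝ}

theorem ordConnected_image_of_affine (hI : I.OrdConnected) (hf : ∀ x ∈ I, f x = m * x + c) :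
    (f '' I).OrdConnected := by
  rw [image_congr hf]
  exact (hI.isPreconnected.image _
    (by fun_prop : Continuous fun x => m * x + c).continuousOn).ordConnected

theorem consGaps_image_inter_image_subset {U X : Set ℝ} (hinj : U.InjOn f) (hX : X ⊆ U)
    (hIU : I ⊆ U) (hI : I.OrdConnected) (hf : ∀ x ∈ I, f x = m * x + c) :
    consGaps (f '' X ∩ f '' I) ⊆ |m| • consGaps X := by
  rw [← hinj.image_inter hX hIU]
  exact (consGaps_image_subset_of_affine fun x hx => hf x hx.2).trans
    (smul_set_mono (consGaps_inter_subset hI))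

end Affine

theorem smul_fractPoints_subset_Ico {P : ℝ} (hP : 0 < P) (θ : ℝ) (N : ℤ) :
    P • fractPoints θ N ⊆ Ico 0 P := by
  rintro _ ⟨_, ⟨d, -, rfl⟩, rfl⟩
  exact ⟨by positivity, by simpa using mul_lt_mul_of_pos_left (Int.fract_lt_one _) hP⟩

theorem orbitSet_eq_image_smul_fractPoints {f : ℝ → ℝ} {P : ℝ} (hper : Function.Periodic f P)
    (hP : P ≠ 0) (α : ℝ) (N : ℕ) :
    orbitSet f α 0 N = f '' (P • fractPoints (α / P) N) := by
  have hfract : ∀ d : ℤ, f (P * Int.fract (d * (α / P))) = f (d * α) := fun d => by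
    have hP' : P * Int.fract (d * (α / P)) = d * α - ⌊d * (α / P)⌋ * P := by
      rw [← Int.self_sub_floor]; field_simp
    rw [hP', hper.sub_int_mul_eq]
  ext y
  constructor
  · rintro ⟨d, h1, h2, rfl⟩
    exact ⟨_, ⟨_, ⟨d, ⟨by omega, by omega⟩, rfl⟩, rfl⟩, by simpa using hfract d⟩
  · rintro ⟨_, ⟨_, ⟨d, ⟨h1, h2⟩, rfl⟩, rfl⟩, rfl⟩
    lift d to ℕ using by omega
    exact ⟨d, by omega, by omega, by simpa using hfract d⟩

theorem ncard_gapSet_le (f : ℝ → ℝ) (α β : ℝ) (N : ℕ) :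
    (gapSet f α β N).ncard ≤ (consGaps (orbitSet f α β N)).ncard + 1 :=
  (ncard_union_le _ _).trans (by rw [ncard_singleton])

theorem gaps_of_injective_piecewise_linear_general (P : ℝ) (hP : 0 < P)
    (f : ℝ → ℝ) (hper : ∀ x, f (x + P) = f x)
    (ℓ : ℕ) (hl : 0 < ℓ) (t m c : ℕ → ℝ)
    (ht0 : t 0 = 0) (htl : t ℓ = P)
    (htmono : ∀ i < ℓ, t i < t (i + 1))
    (hpiece : ∀ i < ℓ, ∀ x ∈ Set.Ico (t i) (t (i + 1)), f x = m i * x + c i)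
    (hinj : Set.InjOn f (Set.Ico 0 P))
    (μ : ℕ) (hμ : μ = (Finset.image (fun i => |m i|) (Finset.range ℓ)).card)
    (α : ℝ) (N : ℕ) :
    (gapSet f α 0 N).ncard ≤ 3 * μ + ℓ := by
  classical
  set X := P • fractPoints (α / P) N
  set I : ℕ → Set ℝ := fun j => Ico (t j) (t (j + 1))
  have hSX : orbitSet f α 0 N = f '' X := orbitSet_eq_image_smul_fractPoints hper hP.ne' α N
  have hX : X ⊆ Ico 0 P := smul_fractPoints_subset_Ico hP _ _
  obtain ⟨T, hT, hTX⟩ := exists_finset_consGaps_smul_fractPoints_subset P (α / P) N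
  set A : Finset ℝ := (Finset.range ℓ).image (fun j => |m j|) * T
  have hinterior : ∀ j ∈ Finset.range ℓ, consGaps (f '' X ∩ f '' I j) ⊆ A := fun j hj => by
    have hj : j < ℓ := Finset.mem_range.1 hj
    rw [Finset.coe_mul]
    refine (consGaps_image_inter_image_subset hinj hX ?_ ordConnected_Ico (hpiece j hj)).trans
      ((smul_set_mono hTX).trans (smul_set_subset_mul (by simpa using ⟨j, hj, rfl⟩)))
    simpa [I, ht0, htl] using Ico_subset_Ico_of_forall_lt_succ htmono hj
  have hcover : f '' X ⊆ ⋃ j ∈ Finset.range ℓ, f '' I j := by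
    rw [← image_iUnion₂]
    exact image_mono (hX.trans (by simpa [ht0, htl] using Ico_subset_biUnion_Ico ℓ t))
  have hgaps : (consGaps (f '' X)).ncard ≤ A.card + (ℓ - 1) := by
    simpa using ncard_consGaps_le_of_subset_biUnion ((finite_fractPoints _ _).smul_set.image f)
      hcover (fun j hj => ordConnected_image_of_affine ordConnected_Ico
        (hpiece j (Finset.mem_range.1 hj))) hinterior
  have hA : A.card ≤ μ * 3 := Finset.card_mul_le.trans (hμ ▸ Nat.mul_le_mul_left μ hT)
  calc (gapSet f α 0 N).ncard ≤ (consGaps (f '' X)).ncard + 1 := hSX ▸ ncard_gapSet_le f α 0 N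
    _ ≤ 3 * μ + ℓ := by omega

/-- For a piecewise-linear periodic function injective on its fundamental
domain `[0,P)`, with `ℓ` pieces whose slopes have `μ` distinct magnitudes,
the gap length set has at most `3μ + ℓ` elements. -/
theorem gaps_of_injective_piecewise_linear (P : ℝ) (hP : 0 < P)
    (f : ℝ → ℝ) (hper : ∀ x, f (x + P) = f x)
    (ℓ : ℕ) (hl : 0 < ℓ) (t m c : ℕ → ℝ)
    (ht0 : t 0 = 0) (htl : t ℓ = P)
    (htmono : ∀ i < ℓ, t i < t (i + 1))
    (hpiece : ∀ i < ℓ, ∀ x ∈ Set.Ico (t i) (t (i + 1)), f x = m i * x + c i)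
    (hmax : ∀ i, i + 1 < ℓ → (m i, c i) ≠ (m (i + 1), c (i + 1)))
    (hinj : Set.InjOn f (Set.Ico 0 P))
    (μ : ℕ) (hμ : μ = (Finset.image (fun i => |m i|) (Finset.range ℓ)).card)
    (α : ℝ) (N : ℕ) :
    (gapSet f α 0 N).ncard ≤ 3 * μ + ℓ :=
  gaps_of_injective_piecewise_linear_general P hP f hper ℓ hl t m c ht0 htl htmono hpiece hinj μ hμ
    α N
end

section
/- For every n ∈ ℕ there exists a piecewise-linear periodic function f with exactly two pieces, a real number α, and N ∈ ℕ such that |G_{f,α,N}| > n. Concretely: choose an even natural number N > 4 with n < N/2 - 1, choose 0 < ε < 2/(N-4), define f on [0,1) by f(x) = x for 0 ≤ x ≤ 1/2 and f(x) = (1+ε)x - (1+ε)/2 for 1/2 < x < 1, extend periodically with period 1, and set α = 1/N; then |G_{f,α,N}| > n. -/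
open Set

lemma orbitSet_finite (f : ℝ → ℝ) (α β : ℝ) (N : ℕ) : (orbitSet f α β N).Finite :=
  ((finite_Icc 1 N).image fun d : ℕ => f (d * α + β)).subset
    fun _ ⟨d, h1, h2, hy⟩ => ⟨d, ⟨h1, h2⟩, hy.symm⟩

lemma consGaps_subset_image2 (S : Set ℝ) : consGaps S ⊆ image2 (fun a b => b - a) S S :=
  fun _ ⟨a, ha, b, hb, _, _, hg⟩ => ⟨a, ha, b, hb, hg.symm⟩

lemma gapSet_finite (f : ℝ → ℝ) (α β : ℝ) (N : ℕ) : (gapSet f α β N).Finite :=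
  have hS := orbitSet_finite f α β N
  ((hS.image2 _ hS).subset (consGaps_subset_image2 _)).union (finite_singleton _)

lemma natCast_le_or_add_mul_le {ε : ℝ} {k : ℕ} (hk : ε * k < 1) (d : ℕ) :
    (d : ℝ) ≤ k ∨ (1 + ε) * k ≤ d := by
  rcases le_or_gt d k with hdk | hkd
  · exact .inl (by exact_mod_cast hdk)
  · have : (k : ℝ) + 1 ≤ d := by exact_mod_cast hkd
    exact .inr (by linarith)

lemma add_mul_natCast_le_or_le {ε : ℝ} (hε : 0 ≤ ε) {k : ℕ} (hk : ε * k < 1) (j : ℕ) :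
    (1 + ε) * j ≤ k ∨ (1 + ε) * k ≤ (1 + ε) * j := by
  rcases le_or_gt k j with hkj | hjk
  · exact .inr (by gcongr)
  · have : (j : ℝ) + 1 ≤ k := by exact_mod_cast hjk
    have : ε * j ≤ ε * k := by gcongr
    exact .inl (by nlinarith)

/-- The nearest grid points around `[k h, (1 + ε) k h]` are `(1 + ε) (k - 1) h < k h` and
`(k + 1) h > (1 + ε) k h`, both because `ε k < 1`. -/
lemma mul_mem_consGaps_of_subset_grids {S : Set ℝ} {ε h : ℝ} (hε : 0 < ε) (hh : 0 < h)
    (hS : S ⊆ range (fun d : ℕ => d * h) ∪ range (fun j : ℕ => (1 + ε) * j * h))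
    {k : ℕ} (hk0 : 0 < k) (hk : ε * k < 1) (ha : k * h ∈ S) (hb : (1 + ε) * k * h ∈ S) :
    ε * k * h ∈ consGaps S := by
  refine ⟨_, ha, _, hb, ?_, ?_, by ring⟩
  · have : (0 : ℝ) < ε * k * h := by positivity
    linarith
  · rintro x hx
    rcases hS hx with ⟨d, rfl⟩ | ⟨j, rfl⟩
    · rcases natCast_le_or_add_mul_le hk d with h' | h'
      · exact .inl (mul_le_mul_of_nonneg_right h' hh.le)
      · exact .inr (mul_le_mul_of_nonneg_right h' hh.le)
    · rcases add_mul_natCast_le_or_le hε.le hk j with h' | h'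
      · exact .inl (mul_le_mul_of_nonneg_right h' hh.le)
      · exact .inr (mul_le_mul_of_nonneg_right h' hh.le)

noncomputable def twoPiece (ε x : ℝ) : ℝ :=
  if Int.fract x ≤ 1 / 2 then Int.fract x else (1 + ε) * (Int.fract x - 1 / 2)

lemma twoPiece_add_one (ε x : ℝ) : twoPiece ε (x + 1) = twoPiece ε x := by
  simp only [twoPiece, Int.fract_add_one]

lemma twoPiece_of_mem_Icc (ε : ℝ) {x : ℝ} (hx : x ∈ Icc 0 (1 / 2)) : twoPiece ε x = x := by
  have : Int.fract x = x := Int.fract_eq_self.mpr ⟨hx.1, by linarith [hx.2]⟩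
  simp only [twoPiece, this, if_pos hx.2]

lemma twoPiece_of_mem_Ioo (ε : ℝ) {x : ℝ} (hx : x ∈ Ioo (1 / 2) 1) :
    twoPiece ε x = (1 + ε) * x - (1 + ε) / 2 := by
  have : Int.fract x = x := Int.fract_eq_self.mpr ⟨by linarith [hx.1], hx.2⟩
  simp only [twoPiece, this, if_neg (not_le.mpr hx.1)]
  ring

section Orbit

variable (ε : ℝ) {M : ℕ}

lemma orbitSet_twoPiece_subset (N : ℕ) :
    orbitSet (twoPiece ε) (1 / (2 * M)) 0 N ⊆
      range (fun d : ℕ => d * (1 / (2 * M))) ∪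
        range (fun j : ℕ => (1 + ε) * j * (1 / (2 * M))) := by
  rintro _ ⟨d, -, -, rfl⟩
  have hfract : Int.fract ((d : ℝ) * (1 / (2 * M)) + 0) = (d % (2 * M) : ℕ) / (2 * M) := by
    have := Int.fract_div_natCast_eq_div_natCast_mod (k := ℝ) (m := d) (n := 2 * M)
    push_cast at this
    rw [add_zero, ← div_eq_mul_one_div, this]
  set r := d % (2 * M)
  unfold twoPiece
  rw [hfract]
  split_ifs with hr
  · exact .inl ⟨r, by ring⟩
  · have hM : (0 : ℝ) < M := by
      rcases M.eq_zero_or_pos with h | h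
      · simp [h] at hr
      · exact_mod_cast h
    have hMr : M ≤ r := by
      have : (M : ℝ) < r := by rw [not_le, lt_div_iff₀ (by positivity)] at hr; linarith
      exact_mod_cast this.le
    refine .inr ⟨r - M, ?_⟩
    simp only [Nat.cast_sub hMr]
    field_simp

lemma natCast_mul_mem_orbitSet_twoPiece {k : ℕ} (hk1 : 1 ≤ k) (hkM : k ≤ M) :
    (k : ℝ) * (1 / (2 * M)) ∈ orbitSet (twoPiece ε) (1 / (2 * M)) 0 (2 * M) := by
  have hM : (0 : ℝ) < M := by exact_mod_cast (hk1.trans hkM)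
  have hkM' : (k : ℝ) ≤ M := by exact_mod_cast hkM
  refine ⟨k, hk1, by omega, ?_⟩
  rw [add_zero, twoPiece_of_mem_Icc]
  constructor
  · positivity
  · rw [← div_eq_mul_one_div, div_le_iff₀ (by positivity)]
    linarith

lemma add_mul_natCast_mul_mem_orbitSet_twoPiece {k : ℕ} (hk1 : 1 ≤ k) (hkM : k < M) :
    (1 + ε) * (k : ℝ) * (1 / (2 * M)) ∈ orbitSet (twoPiece ε) (1 / (2 * M)) 0 (2 * M) := by
  have hk1' : (1 : ℝ) ≤ k := by exact_mod_cast hk1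
  have hkM' : (k : ℝ) < M := by exact_mod_cast hkM
  have hM : (0 : ℝ) < M := by linarith
  refine ⟨M + k, by omega, by omega, ?_⟩
  rw [add_zero, twoPiece_of_mem_Ioo]
  · field_simp
    push_cast
    ring
  · push_cast
    constructor
    · rw [← div_eq_mul_one_div, lt_div_iff₀ (by positivity)]
      linarith
    · rw [← div_eq_mul_one_div, div_lt_one (by positivity)]
      linarith

end Orbit

theorem le_ncard_gapSet_twoPiece {ε : ℝ} (hε : 0 < ε) {m : ℕ} (hεm : ε * m < 1) :
    m ≤ (gapSet (twoPiece ε) (1 / (2 * (m + 1 : ℕ))) 0 (2 * (m + 1))).ncard := by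
  set h : ℝ := 1 / (2 * (m + 1 : ℕ))
  have hh : 0 < h := by positivity
  have hgaps : ∀ k ∈ Icc 1 m, ε * k * h ∈ gapSet (twoPiece ε) h 0 (2 * (m + 1)) := by
    rintro k ⟨hk1, hkm⟩
    have hεk : ε * k < 1 := lt_of_le_of_lt (by gcongr) hεm
    exact .inl <| mul_mem_consGaps_of_subset_grids hε hh (orbitSet_twoPiece_subset ε _) hk1 hεk
      (natCast_mul_mem_orbitSet_twoPiece ε hk1 (by omega))
      (add_mul_natCast_mul_mem_orbitSet_twoPiece ε hk1 (by omega))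
  have hinj : InjOn (fun k : ℕ => ε * k * h) (Icc 1 m) := fun a _ b _ hab => by
    simpa [hε.ne', hh.ne'] using hab
  calc m = (Icc 1 m).ncard := by simp
    _ ≤ _ := ncard_le_ncard_of_injOn _ hgaps hinj (gapSet_finite _ _ _ _)

/-- For every `n` there is a piecewise-linear periodic function with two
pieces whose gap length set exceeds `n` in cardinality for suitable `α, N`. -/
theorem two_piece_unbounded_gaps (n : ℕ) :
    ∃ (f : ℝ → ℝ) (α : ℝ) (N : ℕ) (ε : ℝ), 0 < ε ∧
      (∀ x, f (x + 1) = f x) ∧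
      (∀ x ∈ Set.Icc (0 : ℝ) (1 / 2), f x = x) ∧
      (∀ x ∈ Set.Ioo (1 / 2 : ℝ) 1, f x = (1 + ε) * x - (1 + ε) / 2) ∧
      n < (gapSet f α 0 N).ncard := by
  set ε : ℝ := 1 / (n + 2)
  have hε : 0 < ε := by positivity
  have hεn : ε * (n + 1 : ℕ) < 1 := by
    rw [one_div_mul_eq_div, div_lt_one (by positivity)]
    push_cast
    linarith
  exact ⟨twoPiece ε, 1 / (2 * (n + 2 : ℕ)), 2 * (n + 2), ε, hε, twoPiece_add_one ε,
    fun _ => twoPiece_of_mem_Icc ε, fun _ => twoPiece_of_mem_Ioo ε,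
    le_ncard_gapSet_twoPiece hε hεn⟩
end

section
/- Let f : ℝ → ℝ be a periodic, twice continuously differentiable function with f''(0) ≠ 0. Then for every n ∈ ℕ there exists α ∈ ℝ such that |G_{f,α,n+1}| ≥ n, i.e., the values f(α), f(2α), …, f((n+1)α) produce at least n distinct gap lengths. -/
/-!
Near `0` the second derivative keeps the sign of `f'' 0`, and since `-f` has the same gap set
we may assume it is positive. Then `f` is strictly convex on some `[0, c]`, and because `f'` is
strictly increasing there it has a constant sign on `(0, c')` for some `c' ≤ c`, so `f` is
strictly monotone on `[0, c']`. For `α = c' / (n + 1)` the values `f (d * α)`, `1 ≤ d ≤ n + 1`,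
are therefore listed in (reverse) order, their consecutive gaps are the forward differences
`f ((d + 1) * α) - f (d * α)`, and these are pairwise distinct by strict convexity.
-/

open Set fwdDiff

lemma consGaps_neg_subset (S : Set ℝ) : consGaps (-S) ⊆ consGaps S := by
  rintro _ ⟨a, ha, b, hb, hab, hadj, rfl⟩
  refine ⟨-b, hb, -a, ha, neg_lt_neg hab, fun x hx => ?_, by ring⟩
  rcases hadj (-x) (by simpa using hx) with h | h
  · exact Or.inr (by linarith)
  · exact Or.inl (by linarith)

lemma consGaps_neg (S : Set ℝ) : consGaps (-S) = consGaps S :=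
  (consGaps_neg_subset S).antisymm (by simpa using consGaps_neg_subset (-S))

lemma finite_consGaps {S : Set ℝ} (hS : S.Finite) : (consGaps S).Finite :=
  (hS.image2 (fun a b => b - a) hS).subset <| by
    rintro _ ⟨a, ha, b, hb, -, -, rfl⟩
    exact ⟨a, ha, b, hb, rfl⟩

lemma fwdDiff_mem_consGaps_image {y : ℕ → ℝ} {a b d : ℕ} (hy : StrictMonoOn y (Icc a b))
    (hd : d ∈ Ico a b) : Δ_[1] y d ∈ consGaps (y '' Icc a b) := by
  have hd₀ : d ∈ Icc a b := Ico_subset_Icc_self hd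
  have hd₁ : d + 1 ∈ Icc a b := ⟨hd.1.trans d.le_succ, hd.2⟩
  refine ⟨y d, mem_image_of_mem y hd₀, y (d + 1), mem_image_of_mem y hd₁,
    hy hd₀ hd₁ d.lt_succ_self, ?_, rfl⟩
  rintro _ ⟨k, hk, rfl⟩
  rcases le_or_gt k d with hkd | hdk
  · exact Or.inl (hy.monotoneOn hk hd₀ hkd)
  · exact Or.inr (hy.monotoneOn hd₁ hk hdk)

lemma le_ncard_consGaps_image {y : ℕ → ℝ} {a b : ℕ} (hy : StrictMonoOn y (Icc a b))
    (hΔ : InjOn (Δ_[1] y) (Ico a b)) : b - a ≤ (consGaps (y '' Icc a b)).ncard :=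
  calc b - a = (Δ_[1] y '' Ico a b).ncard := by rw [hΔ.ncard_image, ncard_Ico_nat]
    _ ≤ _ := ncard_le_ncard (image_subset_iff.2 fun _ => fwdDiff_mem_consGaps_image hy)
      (finite_consGaps ((finite_Icc a b).image y))

lemma orbitSet_eq_image (f : ℝ → ℝ) (α β : ℝ) (N : ℕ) :
    orbitSet f α β N = (fun d : ℕ => f (d * α + β)) '' Icc 1 N := by
  ext
  simp [orbitSet, and_assoc, eq_comm]

lemma gapSet_neg (f : ℝ → ℝ) (α β : ℝ) (N : ℕ) : gapSet (-f) α β N = gapSet f α β N := by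
  have horbit : orbitSet (-f) α β N = -orbitSet f α β N := by
    simp only [orbitSet_eq_image, Pi.neg_apply, ← image_neg_eq_neg, image_image]
  have hrange : range (-f) = -range f := by
    rw [← image_neg_eq_neg, ← range_comp]; rfl
  simp only [gapSet, horbit, hrange, consGaps_neg, Real.sInf_neg, Real.sSup_neg]
  congr 2
  ring

lemma le_ncard_gapSet {f : ℝ → ℝ} {α β : ℝ} {n : ℕ}
    (hmono : StrictMonoOn (fun d : ℕ => f (d * α + β)) (Icc 1 (n + 1)) ∨
      StrictAntiOn (fun d : ℕ => f (d * α + β)) (Icc 1 (n + 1)))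
    (hΔ : InjOn (Δ_[1] fun d : ℕ => f (d * α + β)) (Ico 1 (n + 1))) :
    n ≤ (gapSet f α β (n + 1)).ncard := by
  wlog hf : StrictMonoOn (fun d : ℕ => f (d * α + β)) (Icc 1 (n + 1)) generalizing f
  · rw [← gapSet_neg]
    refine this (Or.inl (hmono.resolve_left hf).neg) ?_ (hmono.resolve_left hf).neg
    have hneg : (Δ_[1] fun d : ℕ => (-f) (d * α + β)) = -Δ_[1] fun d : ℕ => f (d * α + β) := by
      funext d; simp only [fwdDiff, Pi.neg_apply]; ring
    rw [hneg]
    exact neg_injective.comp_injOn hΔ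
  have hcons := le_ncard_consGaps_image hf hΔ
  rw [← orbitSet_eq_image, add_tsub_cancel_right] at hcons
  refine hcons.trans (ncard_le_ncard subset_union_left ?_)
  have horbit : (orbitSet f α β (n + 1)).Finite := by
    rw [orbitSet_eq_image]; exact (finite_Icc _ _).image _
  exact (finite_consGaps horbit).union (finite_singleton _)

lemma StrictMonoOn.exists_forall_pos_or_forall_neg {α β : Type*} [Preorder α] [LinearOrder β]
    [Zero β] {g : α → β} {a b : α} (hg : StrictMonoOn g (Icc a b)) (hab : a < b) :
    ∃ c, a < c ∧ c ≤ b ∧ ((∀ x ∈ Ioo a c, 0 < g x) ∨ ∀ x ∈ Ioo a c, g x < 0) := by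
  by_cases h : ∀ x ∈ Ioo a b, 0 < g x
  · exact ⟨b, hab, le_rfl, Or.inl h⟩
  push Not at h
  obtain ⟨c, hc, hgc⟩ := h
  refine ⟨c, hc.1, hc.2.le, Or.inr fun x hx => ?_⟩
  exact (hg ⟨hx.1.le, hx.2.le.trans hc.2.le⟩ (Ioo_subset_Icc_self hc) hx.2).trans_le hgc

lemma exists_strictMonoOn_deriv_Icc_of_deriv2_pos {f : ℝ → ℝ} (hf : ContDiff ℝ 2 f)
    (h0 : 0 < deriv (deriv f) 0) : ∃ δ > 0, StrictMonoOn (deriv f) (Icc 0 δ) := by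
  have hf' : ContDiff ℝ 1 (deriv f) := hf.deriv'
  have hf'' : Continuous (deriv (deriv f)) := (hf.iterate_deriv' 0 2).continuous
  obtain ⟨δ, hδ, hpos⟩ := mem_nhdsGE_iff_exists_Icc_subset.1 <|
    (hf''.continuousAt.tendsto.mono_left nhdsWithin_le_nhds).eventually_const_lt h0
  exact ⟨δ, hδ, strictMonoOn_of_deriv_pos (convex_Icc 0 δ) hf'.continuous.continuousOn
    fun x hx => hpos (interior_subset hx)⟩

lemma exists_strictMonoOn_or_strictAntiOn_Icc {f : ℝ → ℝ} {a b : ℝ} (hab : a < b)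
    (hf : ContinuousOn f (Icc a b)) (hf' : StrictMonoOn (deriv f) (Icc a b)) :
    ∃ c, a < c ∧ c ≤ b ∧ (StrictMonoOn f (Icc a c) ∨ StrictAntiOn f (Icc a c)) := by
  obtain ⟨c, hac, hcb, hsign⟩ := hf'.exists_forall_pos_or_forall_neg hab
  have hfc : ContinuousOn f (Icc a c) := hf.mono (Icc_subset_Icc_right hcb)
  refine ⟨c, hac, hcb, hsign.imp (fun h => ?_) fun h => ?_⟩
  · exact strictMonoOn_of_deriv_pos (convex_Icc a c) hfc (by rwa [interior_Icc])
  · exact strictAntiOn_of_deriv_neg (convex_Icc a c) hfc (by rwa [interior_Icc])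

lemma StrictConvexOn.strictMonoOn_fwdDiff_nat {s : Set ℝ} {f : ℝ → ℝ}
    (hf : StrictConvexOn ℝ s f) {α β : ℝ} (hα : 0 < α) {N : ℕ}
    (hs : ∀ d ≤ N + 1, (d : ℝ) * α + β ∈ s) :
    StrictMonoOn (Δ_[1] fun d : ℕ => f (d * α + β)) (Iic N) := by
  refine strictMonoOn_of_lt_succ ordConnected_Iic fun d _ _ hd => ?_
  rw [Order.succ_eq_add_one, mem_Iic] at hd
  have hslope := hf.slope_strict_mono_adjacent (hs d (by omega)) (hs (d + 2) (by omega))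
    (y := (d + 1 : ℕ) * α + β) (by push_cast; linarith) (by push_cast; linarith)
  have hstep : ∀ k : ℕ, ((k + 1 : ℕ) : ℝ) * α + β - (k * α + β) = α := fun k => by push_cast; ring
  rw [hstep, show ((d + 2 : ℕ) : ℝ) = ((d + 1 + 1 : ℕ) : ℝ) from rfl, hstep,
    div_lt_div_iff_of_pos_right hα] at hslope
  exact hslope

theorem exists_le_ncard_gapSet_of_deriv2_pos {f : ℝ → ℝ} (hf : ContDiff ℝ 2 f)
    (h0 : 0 < deriv (deriv f) 0) (n : ℕ) : ∃ α, n ≤ (gapSet f α 0 (n + 1)).ncard := by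
  obtain ⟨δ, hδ, hf'⟩ := exists_strictMonoOn_deriv_Icc_of_deriv2_pos hf h0
  obtain ⟨c, hc, hcδ, hmono⟩ :=
    exists_strictMonoOn_or_strictAntiOn_Icc hδ hf.continuous.continuousOn hf'
  have hconv : StrictConvexOn ℝ (Icc 0 c) f :=
    ((hf'.mono interior_subset).strictConvexOn_of_deriv (convex_Icc 0 δ)
      hf.continuous.continuousOn).subset (Icc_subset_Icc_right hcδ) (convex_Icc 0 c)
  set α := c / (n + 1)
  have hα : 0 < α := by positivity
  have hpts : ∀ d ≤ n + 1, (d : ℝ) * α + 0 ∈ Icc 0 c := fun d hd => by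
    refine ⟨by positivity, ?_⟩
    calc (d : ℝ) * α + 0 ≤ (n + 1) * α := by rw [add_zero]; gcongr; exact_mod_cast hd
      _ = c := mul_div_cancel₀ c (by positivity)
  have hprog : StrictMonoOn (fun d : ℕ => (d : ℝ) * α + 0) (Icc 1 (n + 1)) :=
    fun a _ b _ hab => by simp only [add_zero]; gcongr
  have hmaps : MapsTo (fun d : ℕ => (d : ℝ) * α + 0) (Icc 1 (n + 1)) (Icc 0 c) :=
    fun d hd => hpts d hd.2
  refine ⟨α, le_ncard_gapSet ?_ ?_⟩
  · exact hmono.imp (fun h => h.comp hprog hmaps) fun h => h.comp_strictMonoOn hprog hmaps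
  · exact (hconv.strictMonoOn_fwdDiff_nat hα hpts).injOn.mono fun d hd => Nat.le_of_lt_succ hd.2

theorem nonlinear_unbounded_gaps_general (f : ℝ → ℝ) (hf : ContDiff ℝ 2 f)
    (h0 : deriv (deriv f) 0 ≠ 0) :
    ∀ n : ℕ, ∃ α : ℝ, n ≤ (gapSet f α 0 (n + 1)).ncard := by
  intro n
  rcases h0.lt_or_gt with hneg | hpos
  · simp_rw [← gapSet_neg f]
    exact exists_le_ncard_gapSet_of_deriv2_pos hf.neg (by simpa [deriv.neg'] using hneg) n
  · exact exists_le_ncard_gapSet_of_deriv2_pos hf hpos n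

/-- A periodic `C²` function with `f''(0) ≠ 0` has arbitrarily many gap
lengths: for every `n` there is `α` with `|G_{f,α,n+1}| ≥ n`. -/
theorem nonlinear_unbounded_gaps (f : ℝ → ℝ) (P : ℝ) (hP : 0 < P)
    (hper : ∀ x, f (x + P) = f x) (hf : ContDiff ℝ 2 f)
    (h0 : deriv (deriv f) 0 ≠ 0) :
    ∀ n : ℕ, ∃ α : ℝ, n ≤ (gapSet f α 0 (n + 1)).ncard :=
  nonlinear_unbounded_gaps_general f hf h0
end
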